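/- β-transition soundness for RKNL: if k is a reachable configuration and k steps to k' by transition (6), then the decoding of k reduces in one normal-order β-step to the decoding of k': ⟦k⟧ →_no ⟦k'⟧. -/
import Mathlib


set_option autoImplicit false
set_option maxHeartbeats 1000000

namespace RKNL

/- Pure lambda terms over a type of variables. -/
inductive Tm (V : Type) : Type
  | var : V → Tm V
  | app : Tm V → Tm V → Tm V
  | lam : V → Tm V → Tm V
  deriving DecidableEq

abbrev Ident : Type := ℕ
abbrev Loc : Type := ℕ

/-- Lookup in an association list (first match). -/
def lookupL {β : Type} : List (ℕ × β) → ℕ → Option β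
  | [], _ => none
  | (a, b) :: l, x => if x = a then some b else lookupL l x

/-- Update of an association list. -/
def updL {β : Type} (l : List (ℕ × β)) (x : ℕ) (b : β) : List (ℕ × β) :=
  l.map fun p => if p.1 = x then (x, b) else p

/-- Environments map identifiers to store locations. -/
abbrev Env : Type := List (Ident × Loc)

/-- Closures pair a term with an environment. -/
abbrev Closure : Type := Tm Ident × Env

/-- Values: terms (normal forms), or abstraction closures annotated with a location. -/
inductive Value : Type
  | tm : Tm Ident → Value
  | abs : Ident → Tm Ident → Env → Loc → Value
  deriving DecidableEq

/-- Storable values (memothunks):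
`pend x t e` is the `todo ⊥` placeholder allocated for the abstraction `(λx.t, e)`,
`todo c` an unevaluated argument thunk, `done v` a memoized value. -/
inductive Storable : Type
  | pend : Ident → Tm Ident → Env → Storable
  | todo : Closure → Storable
  | done : Value → Storable
  deriving DecidableEq

/-- Stores map locations to storable values. -/
abbrev Store : Type := List (Loc × Storable)

/-- Stack frames: `arg c` is `(□ c)`, `appL t` is `(t □)`, `lamF x` is `λx.□`,
`cache ℓ` is `ℓ := □`. -/
inductive Frame : Type
  | arg : Closure → Frame
  | appL : Tm Ident → Frame
  | lamF : Ident → Frame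
  | cache : Loc → Frame
  deriving DecidableEq

abbrev Stack : Type := List Frame

/-- Machine configurations: evaluation mode `⟨c, s, σ⟩▸` and continue mode `⟨σ, v, s⟩◂`. -/
inductive Conf : Type
  | eval : Closure → Stack → Store → Conf
  | cont : Store → Value → Stack → Conf

/-- The initial configuration loading a term. -/
def Conf.init (t : Tm Ident) : Conf := .eval (t, []) [] []

def Conf.store : Conf → Store
  | .eval _ _ σ => σ
  | .cont σ _ _ => σ

def Conf.stack : Conf → Stack
  | .eval _ s _ => s
  | .cont _ _ s => s

/- Identifiers occurring in a configuration (used for freshness of generated names). -/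
def tmVars : Tm Ident → List Ident
  | .var x => [x]
  | .app a b => tmVars a ++ tmVars b
  | .lam x t => x :: tmVars t

def envVars (e : Env) : List Ident := e.map Prod.fst

def valVars : Value → List Ident
  | .tm t => tmVars t
  | .abs x t e _ => x :: (tmVars t ++ envVars e)

def storableVars : Storable → List Ident
  | .pend x t e => x :: (tmVars t ++ envVars e)
  | .todo c => tmVars c.1 ++ envVars c.2
  | .done v => valVars v

def frameVars : Frame → List Ident
  | .arg c => tmVars c.1 ++ envVars c.2
  | .appL t => tmVars t
  | .lamF x => [x]
  | .cache _ => []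

def stackVars (s : Stack) : List Ident := s.foldr (fun f acc => frameVars f ++ acc) []

def storeVars (σ : Store) : List Ident := σ.foldr (fun p acc => storableVars p.2 ++ acc) []

def confVars : Conf → List Ident
  | .eval c s σ => tmVars c.1 ++ envVars c.2 ++ stackVars s ++ storeVars σ
  | .cont σ v s => valVars v ++ stackVars s ++ storeVars σ

/-- The top of the stack is not an argument frame. -/
def Stack.noArgTop : Stack → Prop
  | Frame.arg _ :: _ => False
  | _ => True

/-- The top of the stack is not a memoization frame. -/
def Stack.noCacheTop : Stack → Prop
  | Frame.cache _ :: _ => False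
  | _ => True

/-- The eleven transitions of the RKNL abstract machine, indexed by rule number. -/
inductive Step : ℕ → Conf → Conf → Prop
  | r1 {t1 t2 : Tm Ident} {e : Env} {s : Stack} {σ : Store} :
      Step 1 (.eval (.app t1 t2, e) s σ) (.eval (t1, e) (.arg (t2, e) :: s) σ)
  | r2 {x : Ident} {t : Tm Ident} {e : Env} {s : Stack} {σ : Store} {ℓ : Loc}
      (h : lookupL σ ℓ = none) :
      Step 2 (.eval (.lam x t, e) s σ) (.cont ((ℓ, .pend x t e) :: σ) (.abs x t e ℓ) s)
  | r3 {x : Ident} {e e2 : Env} {s : Stack} {σ : Store} {ℓ : Loc} {t : Tm Ident}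
      (he : lookupL e x = some ℓ) (hσ : lookupL σ ℓ = some (.todo (t, e2))) :
      Step 3 (.eval (.var x, e) s σ) (.eval (t, e2) (.cache ℓ :: s) σ)
  | r4done {x : Ident} {e : Env} {s : Stack} {σ : Store} {ℓ : Loc} {v : Value}
      (he : lookupL e x = some ℓ) (hσ : lookupL σ ℓ = some (.done v)) :
      Step 4 (.eval (.var x, e) s σ) (.cont σ v s)
  | r4free {x : Ident} {e : Env} {s : Stack} {σ : Store}
      (he : lookupL e x = none) :
      Step 4 (.eval (.var x, e) s σ) (.cont σ (.tm (.var x)) s)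
  | r5 {σ : Store} {v : Value} {ℓ : Loc} {s : Stack} :
      Step 5 (.cont σ v (.cache ℓ :: s)) (.cont (updL σ ℓ (.done v)) v s)
  | r6 {σ : Store} {x : Ident} {t t2 : Tm Ident} {e e2 : Env} {ℓ ℓ2 : Loc} {s : Stack}
      (h : lookupL σ ℓ2 = none) :
      Step 6 (.cont σ (.abs x t e ℓ) (.arg (t2, e2) :: s))
             (.eval (t, (x, ℓ2) :: e) s ((ℓ2, .todo (t2, e2)) :: σ))
  | r7 {σ : Store} {x x' x0 : Ident} {t t0 : Tm Ident} {e e0 : Env} {ℓ ℓ2 : Loc} {s : Stack}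
      (hσ : lookupL σ ℓ = some (.pend x0 t0 e0))
      (hs1 : Stack.noArgTop s) (hs2 : Stack.noCacheTop s)
      (hℓ2 : lookupL σ ℓ2 = none)
      (hx' : x' ∉ confVars (.cont σ (.abs x t e ℓ) s)) :
      Step 7 (.cont σ (.abs x t e ℓ) s)
             (.eval (t, (x, ℓ2) :: e) (.lamF x' :: .cache ℓ :: s)
                    ((ℓ2, .done (.tm (.var x'))) :: σ))
  | r8 {σ : Store} {x : Ident} {t : Tm Ident} {e : Env} {ℓ : Loc} {s : Stack} {v : Value}
      (hσ : lookupL σ ℓ = some (.done v))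
      (hs1 : Stack.noArgTop s) (hs2 : Stack.noCacheTop s) :
      Step 8 (.cont σ (.abs x t e ℓ) s) (.cont σ v s)
  | r9 {σ : Store} {t t2 : Tm Ident} {e2 : Env} {s : Stack} :
      Step 9 (.cont σ (.tm t) (.arg (t2, e2) :: s)) (.eval (t2, e2) (.appL t :: s) σ)
  | r10 {σ : Store} {t1 t2 : Tm Ident} {s : Stack} :
      Step 10 (.cont σ (.tm t2) (.appL t1 :: s)) (.cont σ (.tm (.app t1 t2)) s)
  | r11 {σ : Store} {t : Tm Ident} {x : Ident} {s : Stack} :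
      Step 11 (.cont σ (.tm t) (.lamF x :: s)) (.cont σ (.tm (.lam x t)) s)

/-- Reachability by machine transitions. -/
inductive Reach (k0 : Conf) : Conf → Prop
  | refl : Reach k0 k0
  | step {k k' : Conf} {r : ℕ} : Reach k0 k → Step r k k' → Reach k0 k'

/- Generic syntax material used by the decoding: variable renaming of terms,
one-hole contexts, neutral/normal terms, normal-order contexts,
capture-avoiding substitution, normal-order reduction and α-equivalence. -/

def Tm.mapVar {V V' : Type} (f : V → V') : Tm V → Tm V'
  | .var x => .var (f x)
  | .app a b => .app (Tm.mapVar f a) (Tm.mapVar f b)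
  | .lam x t => .lam (f x) (Tm.mapVar f t)

/-- Variables of decoded terms: `Sum.inl x` is an ordinary identifier
(free variables and generated fresh names), `Sum.inr x` is the overlined
(marked) copy `x̄`, taken from a disjoint copy of the set of identifiers. -/
abbrev W : Type := Ident ⊕ Ident

/-- Embedding of machine terms into decoded terms. -/
def emb (t : Tm Ident) : Tm W := Tm.mapVar Sum.inl t

/-- One-hole contexts. -/
inductive Ctx (V : Type) : Type
  | hole : Ctx V
  | appL : Ctx V → Tm V → Ctx V
  | appR : Tm V → Ctx V → Ctx V
  | lam : V → Ctx V → Ctx V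

def Ctx.plug {V : Type} : Ctx V → Tm V → Tm V
  | .hole, t => t
  | .appL C u, t => .app (Ctx.plug C t) u
  | .appR u C, t => .app u (Ctx.plug C t)
  | .lam x C, t => .lam x (Ctx.plug C t)

def Ctx.comp {V : Type} : Ctx V → Ctx V → Ctx V
  | .hole, D => D
  | .appL C u, D => .appL (Ctx.comp C D) u
  | .appR u C, D => .appR u (Ctx.comp C D)
  | .lam x C, D => .lam x (Ctx.comp C D)

mutual
  inductive Neutral {V : Type} : Tm V → Prop
    | var (x : V) : Neutral (.var x)
    | app {a n : Tm V} : Neutral a → NormalTm n → Neutral (.app a n)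
  inductive NormalTm {V : Type} : Tm V → Prop
    | lam {x : V} {t : Tm V} : NormalTm t → NormalTm (.lam x t)
    | neu {a : Tm V} : Neutral a → NormalTm a
end

mutual
  inductive NOCtx {V : Type} : Ctx V → Prop
    | bar {C : Ctx V} : NOBar C → NOCtx C
    | lam {x : V} {C : Ctx V} : NOCtx C → NOCtx (.lam x C)
  inductive NOBar {V : Type} : Ctx V → Prop
    | hole : NOBar .hole
    | appL {C : Ctx V} {t : Tm V} : NOBar C → NOBar (.appL C t)
    | appR {a : Tm V} {C : Ctx V} : Neutral a → NOCtx C → NOBar (.appR a C)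
end

/-- `x` occurs free in a term. -/
inductive FreeIn {V : Type} (x : V) : Tm V → Prop
  | var : FreeIn x (.var x)
  | appL {a b : Tm V} : FreeIn x a → FreeIn x (.app a b)
  | appR {a b : Tm V} : FreeIn x b → FreeIn x (.app a b)
  | lam {y : V} {t : Tm V} : x ≠ y → FreeIn x t → FreeIn x (.lam y t)

/-- Capture-avoiding substitution `t{x := u}` (as a relation, allowing
α-renaming of binders that would capture variables of `u`). -/
inductive SubstRel {V : Type} : V → Tm V → Tm V → Tm V → Prop
  | var_eq {x : V} {u : Tm V} : SubstRel x u (.var x) u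
  | var_ne {x y : V} {u : Tm V} : y ≠ x → SubstRel x u (.var y) (.var y)
  | app {x : V} {u a a' b b' : Tm V} : SubstRel x u a a' → SubstRel x u b b' →
      SubstRel x u (.app a b) (.app a' b')
  | lam_same {x : V} {u t : Tm V} : SubstRel x u (.lam x t) (.lam x t)
  | lam {x y : V} {u t t' : Tm V} : y ≠ x → ¬ FreeIn y u → SubstRel x u t t' →
      SubstRel x u (.lam y t) (.lam y t')
  | lam_rename {x y z : V} {u t t0 t' : Tm V} : y ≠ x → FreeIn y u →
      z ≠ x → ¬ FreeIn z u → ¬ FreeIn z t →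
      SubstRel y (.var z) t t0 → SubstRel x u t0 t' →
      SubstRel x u (.lam y t) (.lam z t')

/-- One step of normal-order reduction: β-contraction in a normal-order context. -/
inductive NOStep {V : Type} : Tm V → Tm V → Prop
  | mk {N : Ctx V} {x : V} {b u r : Tm V} :
      NOCtx N → SubstRel x u b r →
      NOStep (N.plug (.app (.lam x b) u)) (N.plug r)

/-- Correspondence of variables under a list of bound-variable renamings. -/
inductive AVar {V : Type} : List (V × V) → V → V → Prop
  | nil {x : V} : AVar [] x x
  | here {x y : V} {ρ : List (V × V)} : AVar ((x, y) :: ρ) x y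
  | there {x y a b : V} {ρ : List (V × V)} :
      x ≠ a → y ≠ b → AVar ρ x y → AVar ((a, b) :: ρ) x y

/-- α-equivalence up to a list of bound-variable renamings. -/
inductive Alpha {V : Type} : List (V × V) → Tm V → Tm V → Prop
  | var {ρ : List (V × V)} {x y : V} : AVar ρ x y → Alpha ρ (.var x) (.var y)
  | app {ρ : List (V × V)} {a a' b b' : Tm V} :
      Alpha ρ a a' → Alpha ρ b b' → Alpha ρ (.app a b) (.app a' b')
  | lam {ρ : List (V × V)} {x y : V} {t t' : Tm V} :
      Alpha ((x, y) :: ρ) t t' → Alpha ρ (.lam x t) (.lam y t')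

/-- α-equivalence: equality up to renaming of bound variables. -/
def AlphaEq {V : Type} (t t' : Tm V) : Prop := Alpha [] t t'

/-- Subterm relation. -/
inductive Subtm {V : Type} : Tm V → Tm V → Prop
  | refl (t : Tm V) : Subtm t t
  | appL {s a b : Tm V} : Subtm s a → Subtm s (.app a b)
  | appR {s a b : Tm V} : Subtm s b → Subtm s (.app a b)
  | lam {s t : Tm V} {x : V} : Subtm s t → Subtm s (.lam x t)

def IsRedex {V : Type} (t : Tm V) : Prop := ∃ (x : V) (b u : Tm V), t = .app (.lam x b) u

/-- β-normal form: no subterm is a β-redex. -/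
def BetaNormal {V : Type} (t : Tm V) : Prop := ∀ s : Tm V, Subtm s t → ¬ IsRedex s

/- The history-dependent decoding of RKNL configurations. -/

/-- `HistFrom k0 H k` : `H` is the full sequence of configurations (oldest
first) of an execution from `k0` to `k`. -/
inductive HistFrom (k0 : Conf) : List Conf → Conf → Prop
  | refl : HistFrom k0 [k0] k0
  | step {H : List Conf} {k k' : Conf} {r : ℕ} :
      HistFrom k0 H k → Step r k k' → HistFrom k0 (H ++ [k']) k'

/-- `initOf H ℓ = some (H', sv)` : in the history `H`, location `ℓ` was
initialized with the storable value `sv`, and `H'` is the prefix of the history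
up to (and including) the configuration where `ℓ` was initialized. -/
def initOf : List Conf → Loc → Option (List Conf × Storable)
  | [], _ => none
  | k :: H, ℓ =>
    match lookupL (Conf.store k) ℓ with
    | some sv => some ([k], sv)
    | none => Option.map (fun p => (k :: p.1, p.2)) (initOf H ℓ)

/-- Decoding environments: an identifier is mapped either to a store location
(`Sum.inl ℓ`) or to an overlined variable `ȳ` (`Sum.inr y`) introduced when
decoding an abstraction. -/
abbrev DEnv : Type := List (Ident × (Loc ⊕ Ident))

def embEnv (e : Env) : DEnv := e.map fun p => (p.1, Sum.inl p.2)

/-- Decoding of closures relative to an execution history: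
`DecC H t e d` means the closure with term `t` and decoding environment `e`
decodes to the term `d` relative to the history `H`. A variable bound to a
location initialized (by rule 6) with an argument thunk decodes to the decoding
of that thunk at the time of initialization; a variable bound to a location
initialized (by rule 7) with a fresh variable decodes to that variable; an
unbound variable decodes to itself. -/
inductive DecC : List Conf → Tm Ident → DEnv → Tm W → Prop
  | app {H : List Conf} {t1 t2 : Tm Ident} {e : DEnv} {d1 d2 : Tm W} :
      DecC H t1 e d1 → DecC H t2 e d2 → DecC H (.app t1 t2) e (.app d1 d2)
  | lam {H : List Conf} {x : Ident} {t : Tm Ident} {e : DEnv} {d : Tm W} :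
      DecC H t ((x, Sum.inr x) :: e) d → DecC H (.lam x t) e (.lam (Sum.inr x) d)
  | var_bar {H : List Conf} {x y : Ident} {e : DEnv} :
      lookupL e x = some (Sum.inr y) → DecC H (.var x) e (.var (Sum.inr y))
  | var_arg {H H' : List Conf} {x : Ident} {e : DEnv} {ℓ : Loc}
      {t2 : Tm Ident} {e2 : Env} {d : Tm W} :
      lookupL e x = some (Sum.inl ℓ) →
      initOf H ℓ = some (H', .todo (t2, e2)) →
      DecC H' t2 (embEnv e2) d →
      DecC H (.var x) e d
  | var_fresh {H H' : List Conf} {x x' : Ident} {e : DEnv} {ℓ : Loc} :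
      lookupL e x = some (Sum.inl ℓ) →
      initOf H ℓ = some (H', .done (.tm (.var x'))) →
      DecC H (.var x) e (.var (Sum.inl x'))
  | var_free {H : List Conf} {x : Ident} {e : DEnv} :
      lookupL e x = none → DecC H (.var x) e (.var (Sum.inl x))

/-- Decoding of values. -/
inductive DecV : List Conf → Value → Tm W → Prop
  | tm {H : List Conf} {t : Tm Ident} : DecV H (.tm t) (emb t)
  | abs {H : List Conf} {x : Ident} {t : Tm Ident} {e : Env} {ℓ : Loc} {d : Tm W} :
      DecC H (.lam x t) (embEnv e) d → DecV H (.abs x t e ℓ) d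

/-- Decoding of stacks into one-hole contexts (memoization frames are ignored). -/
inductive DecS : List Conf → Stack → Ctx W → Prop
  | nil {H : List Conf} : DecS H [] .hole
  | arg {H : List Conf} {t : Tm Ident} {e : Env} {s : Stack} {C : Ctx W} {d : Tm W} :
      DecS H s C → DecC H t (embEnv e) d →
      DecS H (.arg (t, e) :: s) (C.comp (.appL .hole d))
  | appL {H : List Conf} {t : Tm Ident} {s : Stack} {C : Ctx W} :
      DecS H s C → DecS H (.appL t :: s) (C.comp (.appR (emb t) .hole))
  | lamF {H : List Conf} {x : Ident} {s : Stack} {C : Ctx W} :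
      DecS H s C → DecS H (.lamF x :: s) (C.comp (.lam (Sum.inl x) .hole))
  | cache {H : List Conf} {ℓ : Loc} {s : Stack} {C : Ctx W} :
      DecS H s C → DecS H (.cache ℓ :: s) C

/-- Decoding of configurations: the decoded focus is plugged into the decoded stack. -/
inductive DecK : List Conf → Conf → Tm W → Prop
  | eval {H : List Conf} {t : Tm Ident} {e : Env} {s : Stack} {σ : Store}
      {C : Ctx W} {d : Tm W} :
      DecS H s C → DecC H t (embEnv e) d → DecK H (.eval (t, e) s σ) (C.plug d)
  | cont {H : List Conf} {σ : Store} {v : Value} {s : Stack} {C : Ctx W} {d : Tm W} :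
      DecS H s C → DecV H v d → DecK H (.cont σ v s) (C.plug d)
/- ===================== Auxiliary lemmas ===================== -/

section Basic
variable {β : Type}

lemma lookupL_cons {a : ℕ} {b : β} {l : List (ℕ × β)} {x : ℕ} :
    lookupL ((a, b) :: l) x = if x = a then some b else lookupL l x := rfl

lemma updL_cons {k : ℕ} {w : β} {σ : List (ℕ × β)} {a : ℕ} {v : β} :
    updL ((k, w) :: σ) a v = (if k = a then (a, v) else (k, w)) :: updL σ a v := by
  by_cases h : k = a <;> simp [updL, h]

lemma lookupL_updL_ne {σ : List (ℕ × β)} {a ℓ : ℕ} {v : β} (h : ℓ ≠ a) :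
    lookupL (updL σ a v) ℓ = lookupL σ ℓ := by
  induction σ with
  | nil => rfl
  | cons p σ ih =>
    obtain ⟨k, w⟩ := p
    rw [updL_cons]
    by_cases hk : k = a
    · rw [if_pos hk, lookupL_cons, lookupL_cons, if_neg h, if_neg (hk ▸ h), ih]
    · rw [if_neg hk, lookupL_cons, lookupL_cons]
      by_cases hl : ℓ = k
      · rw [if_pos hl, if_pos hl]
      · rw [if_neg hl, if_neg hl, ih]

lemma lookupL_updL_self {σ : List (ℕ × β)} {a : ℕ} {v v' : β}
    (h : lookupL (updL σ a v) a = some v') :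
    v' = v ∧ ∃ w, lookupL σ a = some w := by
  induction σ with
  | nil => simp [updL, lookupL] at h
  | cons p σ ih =>
    obtain ⟨k, w⟩ := p
    rw [updL_cons] at h
    by_cases hk : k = a
    · rw [if_pos hk, lookupL_cons, if_pos rfl] at h
      refine ⟨(Option.some.inj h).symm, w, ?_⟩
      rw [lookupL_cons, if_pos hk.symm]
    · have hak : a ≠ k := fun hh => hk hh.symm
      rw [if_neg hk, lookupL_cons, if_neg hak] at h
      rcases ih h with ⟨h1, w', h2⟩
      exact ⟨h1, w', by rw [lookupL_cons, if_neg hak]; exact h2⟩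

lemma lookupL_updL_none {σ : List (ℕ × β)} {a ℓ : ℕ} {v : β}
    (h : lookupL (updL σ a v) ℓ = none) : lookupL σ ℓ = none := by
  by_cases hl : ℓ = a
  · subst hl
    induction σ with
    | nil => rfl
    | cons p σ ih =>
      obtain ⟨k, w⟩ := p
      rw [updL_cons] at h
      by_cases hk : k = ℓ
      · rw [if_pos hk, lookupL_cons, if_pos rfl] at h
        exact absurd h (by simp)
      · have hlk : ℓ ≠ k := fun hh => hk hh.symm
        rw [if_neg hk, lookupL_cons, if_neg hlk] at h
        rw [lookupL_cons, if_neg hlk]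
        exact ih h
  · rw [lookupL_updL_ne hl] at h; exact h

end Basic

section InitOf

lemma initOf_cons {k : Conf} {H : List Conf} {ℓ : Loc} :
    initOf (k :: H) ℓ = (match lookupL (Conf.store k) ℓ with
      | some sv => some ([k], sv)
      | none => Option.map (fun p => (k :: p.1, p.2)) (initOf H ℓ)) := rfl

lemma initOf_mono {H : List Conf} {ℓ : Loc} {p : List Conf × Storable}
    (h : initOf H ℓ = some p) (L : List Conf) :
    initOf (H ++ L) ℓ = some p := by
  induction H generalizing p with
  | nil => simp [initOf] at h
  | cons k H ih =>
    rw [List.cons_append]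
    unfold initOf at h ⊢
    cases hk : lookupL (Conf.store k) ℓ with
    | some sv => rw [hk] at h; simpa [hk] using h
    | none =>
      rw [hk] at h
      cases hi : initOf H ℓ with
      | none => rw [hi] at h; simp at h
      | some q =>
        rw [hi] at h
        simp only [Option.map_some] at h
        rw [ih hi, Option.map_some]
        exact h

lemma initOf_append_eq {H : List Conf} {ℓ : Loc} (h : (initOf H ℓ).isSome)
    (L : List Conf) : initOf (H ++ L) ℓ = initOf H ℓ := by
  rcases Option.isSome_iff_exists.mp h with ⟨p, hp⟩
  rw [hp, initOf_mono hp]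

lemma initOf_none_append {H L : List Conf} {ℓ : Loc} (h : initOf H ℓ = none) :
    initOf (H ++ L) ℓ = Option.map (fun p => (H ++ p.1, p.2)) (initOf L ℓ) := by
  induction H with
  | nil => simp [initOf]
  | cons k H ih =>
    rw [List.cons_append]
    rw [initOf_cons] at h ⊢
    cases hk : lookupL (Conf.store k) ℓ with
    | some sv => simp [hk] at h
    | none =>
      simp only [hk] at h ⊢
      cases hi : initOf H ℓ with
      | some q => simp [hi] at h
      | none =>
        rw [ih hi]
        cases initOf L ℓ <;> simp

lemma initOf_none_of_all {H : List Conf} {ℓ : Loc}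
    (h : ∀ c ∈ H, lookupL (Conf.store c) ℓ = none) : initOf H ℓ = none := by
  induction H with
  | nil => rfl
  | cons k H ih =>
    unfold initOf
    rw [h k (by simp), ih (fun c hc => h c (by simp [hc]))]
    rfl

lemma initOf_isSome_of_mem {H : List Conf} {c : Conf} {ℓ : Loc} {sv : Storable}
    (hc : c ∈ H) (h : lookupL (Conf.store c) ℓ = some sv) :
    (initOf H ℓ).isSome := by
  induction H with
  | nil => simp at hc
  | cons k H ih =>
    unfold initOf
    cases hk : lookupL (Conf.store k) ℓ with
    | some sv' => simp
    | none =>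
      rcases List.mem_cons.mp hc with rfl | hc'
      · rw [hk] at h; simp at h
      · have := ih hc'
        rcases Option.isSome_iff_exists.mp this with ⟨p, hp⟩
        rw [hp]; simp

end InitOf

section History

lemma lookupL_cons_none {β : Type} {a : ℕ} {b : β} {l : List (ℕ × β)} {x : ℕ}
    (h : lookupL ((a, b) :: l) x = none) : lookupL l x = none := by
  rw [lookupL_cons] at h
  split at h
  · exact absurd h (by simp)
  · exact h

lemma step_dom {r : ℕ} {a b : Conf} {ℓ : Loc} (h : Step r a b)
    (hb : lookupL (Conf.store b) ℓ = none) : lookupL (Conf.store a) ℓ = none := by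
  cases h <;> simp only [Conf.store] at hb ⊢ <;>
    first
      | exact hb
      | exact lookupL_cons_none hb
      | exact lookupL_updL_none hb

lemma hist_store_none {k0 : Conf} {H : List Conf} {k : Conf} {ℓ : Loc}
    (h : HistFrom k0 H k) (hk : lookupL (Conf.store k) ℓ = none) :
    ∀ c ∈ H, lookupL (Conf.store c) ℓ = none := by
  induction h with
  | refl =>
    intro c hc
    have hck : c = k0 := by simpa using hc
    subst hck; exact hk
  | @step H k k' r hh hs ih =>
    intro c hc
    rcases List.mem_append.mp hc with hc' | hc'
    · exact ih (step_dom hs hk) c hc'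
    · have hck : c = k' := by simpa using hc'
      subst hck; exact hk

lemma initOf_fresh {k0 : Conf} {H : List Conf} {k k' : Conf} {ℓ : Loc} {sv : Storable}
    (h : HistFrom k0 H k) (hk : lookupL (Conf.store k) ℓ = none)
    (hk' : lookupL (Conf.store k') ℓ = some sv) :
    initOf (H ++ [k']) ℓ = some (H ++ [k'], sv) := by
  rw [initOf_none_append (initOf_none_of_all (hist_store_none h hk))]
  rw [show initOf [k'] ℓ = some ([k'], sv) by rw [initOf_cons, hk']]
  rfl

end History

section CtxLemmas
variable {V : Type}

lemma comp_hole (C : Ctx V) : C.comp .hole = C := by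
  induction C <;> simp [Ctx.comp, *]

lemma comp_assoc (C D E : Ctx V) : (C.comp D).comp E = C.comp (D.comp E) := by
  induction C <;> simp [Ctx.comp, *]

lemma comp_plug (C D : Ctx V) (t : Tm V) : (C.comp D).plug t = C.plug (D.plug t) := by
  induction C <;> simp [Ctx.comp, Ctx.plug, *]

end CtxLemmas

section EmbLemmas

lemma neutral_emb : ∀ {t : Tm Ident}, (Neutral t → Neutral (emb t)) ∧ (NormalTm t → NormalTm (emb t)) := by
  intro t
  induction t with
  | var x => exact ⟨fun _ => Neutral.var _, fun _ => NormalTm.neu (Neutral.var _)⟩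
  | app a b iha ihb =>
    constructor
    · intro h
      cases h with
      | app ha hb => exact Neutral.app (iha.1 ha) (ihb.2 hb)
    · intro h
      cases h with
      | neu hn =>
        cases hn with
        | app ha hb => exact NormalTm.neu (Neutral.app (iha.1 ha) (ihb.2 hb))
  | lam x t ih =>
    constructor
    · intro h; cases h
    · intro h
      cases h with
      | lam ht => exact NormalTm.lam (ih.2 ht)
      | neu hn => cases hn

lemma lookupL_embEnv {e : Env} {w : Ident} {v : Loc ⊕ Ident}
    (h : lookupL (embEnv e) w = some v) : ∃ ℓ : Loc, v = Sum.inl ℓ := by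
  induction e with
  | nil => simp [embEnv, lookupL] at h
  | cons p e ih =>
    obtain ⟨x, ℓ⟩ := p
    rw [show embEnv ((x, ℓ) :: e) = (x, Sum.inl ℓ) :: embEnv e from rfl, lookupL_cons] at h
    split at h
    · exact ⟨ℓ, (Option.some.inj h).symm⟩
    · exact ih h

lemma embEnv_cons {x : Ident} {ℓ : Loc} {e : Env} :
    embEnv ((x, ℓ) :: e) = (x, Sum.inl ℓ) :: embEnv e := rfl

end EmbLemmas

section DecLemmas

lemma DecC_mono {H : List Conf} {t : Tm Ident} {e : DEnv} {d : Tm W}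
    (h : DecC H t e d) (L : List Conf) : DecC (H ++ L) t e d := by
  induction h with
  | app h1 h2 ih1 ih2 => exact DecC.app ih1 ih2
  | lam h ih => exact DecC.lam ih
  | var_bar hl => exact DecC.var_bar hl
  | var_arg hl hi hs ih => exact DecC.var_arg hl (initOf_mono hi L) hs
  | var_fresh hl hi => exact DecC.var_fresh hl (initOf_mono hi L)
  | var_free hl => exact DecC.var_free hl

lemma DecS_mono {H : List Conf} {s : Stack} {C : Ctx W}
    (h : DecS H s C) (L : List Conf) : DecS (H ++ L) s C := by
  induction h with
  | nil => exact DecS.nil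
  | arg h hc ih => exact DecS.arg ih (DecC_mono hc L)
  | appL h ih => exact DecS.appL ih
  | lamF h ih => exact DecS.lamF ih
  | cache h ih => exact DecS.cache ih

lemma DecC_det {H : List Conf} {t : Tm Ident} {e : DEnv} {d : Tm W}
    (h : DecC H t e d) : ∀ {d' : Tm W}, DecC H t e d' → d = d' := by
  induction h with
  | app h1 h2 ih1 ih2 =>
    intro d' h'
    cases h' with
    | app g1 g2 => rw [ih1 g1, ih2 g2]
  | lam h ih =>
    intro d' h'
    cases h' with
    | lam g => rw [ih g]
  | var_bar hl =>
    intro d' h'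
    cases h' with
    | var_bar hl' => rw [hl] at hl'; rw [Sum.inr.inj (Option.some.inj hl')]
    | var_arg hl' _ _ => rw [hl] at hl'; simp at hl'
    | var_fresh hl' _ => rw [hl] at hl'; simp at hl'
    | var_free hl' => rw [hl] at hl'; simp at hl'
  | var_arg hl hi hs ih =>
    intro d' h'
    cases h' with
    | var_bar hl' => rw [hl] at hl'; simp at hl'
    | var_arg hl' hi' hs' =>
      rw [hl] at hl'
      have hℓ := Sum.inl.inj (Option.some.inj hl')
      subst hℓ
      rw [hi] at hi'
      have := Option.some.inj hi'
      obtain ⟨hH, hsv⟩ := Prod.mk.injEq _ _ _ _ ▸ this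
      have hH : _ = _ := congrArg Prod.fst this
      have hsv : _ = _ := congrArg Prod.snd this
      simp only at hH hsv
      subst hH
      cases hsv
      exact ih hs'
    | var_fresh hl' hi' =>
      rw [hl] at hl'
      have hℓ := Sum.inl.inj (Option.some.inj hl')
      subst hℓ
      rw [hi] at hi'
      simp at hi'
    | var_free hl' => rw [hl] at hl'; simp at hl'
  | var_fresh hl hi =>
    intro d' h'
    cases h' with
    | var_bar hl' => rw [hl] at hl'; simp at hl'
    | var_arg hl' hi' hs' =>
      rw [hl] at hl'
      have hℓ := Sum.inl.inj (Option.some.inj hl')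
      subst hℓ
      rw [hi] at hi'
      simp at hi'
    | var_fresh hl' hi' =>
      rw [hl] at hl'
      have hℓ := Sum.inl.inj (Option.some.inj hl')
      subst hℓ
      rw [hi] at hi'
      have := Option.some.inj hi'
      have hsv : _ = _ := congrArg Prod.snd this
      simp only at hsv
      cases hsv
      rfl
    | var_free hl' => rw [hl] at hl'; simp at hl'
  | var_free hl =>
    intro d' h'
    cases h' with
    | var_bar hl' => rw [hl] at hl'; simp at hl'
    | var_arg hl' _ _ => rw [hl] at hl'; simp at hl'
    | var_fresh hl' _ => rw [hl] at hl'; simp at hl'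
    | var_free hl' => rfl

lemma DecS_det {H : List Conf} {s : Stack} {C : Ctx W}
    (h : DecS H s C) : ∀ {C' : Ctx W}, DecS H s C' → C = C' := by
  induction h with
  | nil => intro C' h'; cases h'; rfl
  | arg h hc ih =>
    intro C' h'
    cases h' with
    | arg g gc => rw [ih g, DecC_det hc gc]
  | appL h ih =>
    intro C' h'
    cases h' with
    | appL g => rw [ih g]
  | lamF h ih =>
    intro C' h'
    cases h' with
    | lamF g => rw [ih g]
  | cache h ih =>
    intro C' h'
    cases h' with
    | cache g => exact ih g

lemma DecC_freeInr {H : List Conf} {t : Tm Ident} {e : DEnv} {d : Tm W}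
    (h : DecC H t e d) :
    ∀ z : Ident, FreeIn (Sum.inr z) d → ∃ w, lookupL e w = some (Sum.inr z) := by
  induction h with
  | app h1 h2 ih1 ih2 =>
    intro z hf
    cases hf with
    | appL hf => exact ih1 z hf
    | appR hf => exact ih2 z hf
  | @lam H x t e d h ih =>
    intro z hf
    cases hf with
    | lam hne hf =>
      rcases ih z hf with ⟨w, hw⟩
      rw [lookupL_cons] at hw
      split at hw
      · exact absurd (Sum.inr.inj (Option.some.inj hw)).symm
          (fun hh => hne (by rw [hh]))
      · exact ⟨w, hw⟩
  | @var_bar H x y e hl =>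
    intro z hf
    cases hf
    exact ⟨x, hl⟩
  | var_arg hl hi hs ih =>
    intro z hf
    rcases ih z hf with ⟨w, hw⟩
    rcases lookupL_embEnv hw with ⟨ℓ, hℓ⟩
    simp at hℓ
  | var_fresh hl hi => intro z hf; cases hf
  | var_free hl => intro z hf; cases hf

/-- All binders in decoded terms are overlined variables. -/
inductive BndInr : Tm W → Prop
  | var (v : W) : BndInr (.var v)
  | app {a b : Tm W} : BndInr a → BndInr b → BndInr (.app a b)
  | lam (x : Ident) {t : Tm W} : BndInr t → BndInr (.lam (Sum.inr x) t)

lemma DecC_bndInr {H : List Conf} {t : Tm Ident} {e : DEnv} {d : Tm W}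
    (h : DecC H t e d) : BndInr d := by
  induction h with
  | app _ _ ih1 ih2 => exact BndInr.app ih1 ih2
  | lam _ ih => exact BndInr.lam _ ih
  | var_bar _ => exact BndInr.var _
  | var_arg _ _ _ ih => exact ih
  | var_fresh _ _ => exact BndInr.var _
  | var_free _ => exact BndInr.var _

lemma substRel_of_not_free {x : Ident} {u : Tm W}
    (hu : ∀ z : Ident, ¬ FreeIn (Sum.inr z) u) :
    ∀ {t : Tm W}, BndInr t → ¬ FreeIn (Sum.inr x) t → SubstRel (Sum.inr x) u t t := by
  intro t hb
  induction hb with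
  | var v =>
    intro hf
    refine SubstRel.var_ne (fun hv => ?_)
    exact hf (hv ▸ FreeIn.var)
  | app hb1 hb2 ih1 ih2 =>
    intro hf
    exact SubstRel.app (ih1 fun hh => hf (FreeIn.appL hh))
      (ih2 fun hh => hf (FreeIn.appR hh))
  | @lam y t hb ih =>
    intro hf
    by_cases hxy : y = x
    · subst hxy; exact SubstRel.lam_same
    · refine SubstRel.lam (fun hh => hxy (Sum.inr.inj hh)) (hu y) (ih fun hh => ?_)
      exact hf (FreeIn.lam (fun hh2 => hxy (Sum.inr.inj hh2).symm) hh)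

lemma DecC_ext {H : List Conf} {t : Tm Ident} {e : DEnv} {d : Tm W}
    (h : DecC H t e d) :
    ∀ {e' : DEnv}, (∀ y, lookupL e' y = lookupL e y) → DecC H t e' d := by
  induction h with
  | app h1 h2 ih1 ih2 => intro e' he; exact DecC.app (ih1 he) (ih2 he)
  | @lam H x t e d h ih =>
    intro e' he
    refine DecC.lam (ih fun y => ?_)
    rw [lookupL_cons, lookupL_cons]
    split
    · rfl
    · exact he y
  | var_bar hl => intro e' he; exact DecC.var_bar (by rw [he]; exact hl)
  | var_arg hl hi hs => intro e' he; exact DecC.var_arg (by rw [he]; exact hl) hi hs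
  | var_fresh hl hi => intro e' he; exact DecC.var_fresh (by rw [he]; exact hl) hi
  | var_free hl => intro e' he; exact DecC.var_free (by rw [he]; exact hl)

end DecLemmas

section SubstMain

lemma lookup_swap {A B : Loc ⊕ Ident} {x y : ℕ} (hxy : x ≠ y) (e : DEnv) (z : ℕ) :
    lookupL ((x, A) :: (y, B) :: e) z = lookupL ((y, B) :: (x, A) :: e) z := by
  rw [lookupL_cons, lookupL_cons, lookupL_cons, lookupL_cons]
  by_cases hzx : z = x
  · subst hzx
    rw [if_pos rfl, if_neg hxy, if_pos rfl]
  · rw [if_neg hzx]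
    by_cases hzy : z = y
    · rw [if_pos hzy, if_pos hzy]
    · rw [if_neg hzy, if_neg hzy, if_neg hzx]

lemma lookup_shadow {A B B' : Loc ⊕ Ident} {x : ℕ} (e : DEnv) (z : ℕ) :
    lookupL ((x, A) :: (x, B) :: e) z = lookupL ((x, A) :: (x, B') :: e) z := by
  rw [lookupL_cons, lookupL_cons, lookupL_cons, lookupL_cons]
  by_cases hzx : z = x
  · rw [if_pos hzx, if_pos hzx]
  · rw [if_neg hzx, if_neg hzx, if_neg hzx, if_neg hzx]

lemma subst_main {H2 : List Conf} {x : Ident} {ℓ2 : Loc} {t2 : Tm Ident} {e2 : Env}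
    {d2 : Tm W}
    (hinit : initOf H2 ℓ2 = some (H2, Storable.todo (t2, e2)))
    (hd2 : DecC H2 t2 (embEnv e2) d2)
    (hfree : ∀ z : Ident, ¬ FreeIn (Sum.inr z) d2) :
    ∀ (t : Tm Ident) {e : DEnv} {dold dnew : Tm W},
      DecC H2 t ((x, Sum.inr x) :: e) dold →
      DecC H2 t ((x, Sum.inl ℓ2) :: e) dnew →
      (∀ w z, lookupL e w = some (Sum.inr z) → z ≠ x) →
      SubstRel (Sum.inr x) d2 dold dnew := by
  intro t
  induction t with
  | var w =>
    intro e dold dnew hold hnew hR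
    by_cases hwx : w = x
    · subst hwx
      -- old decoding is var (inr x)
      have hlo : lookupL ((w, Sum.inr w) :: e) w = some (Sum.inr w) := by
        rw [lookupL_cons, if_pos rfl]
      have hln : lookupL ((w, Sum.inl ℓ2) :: e) w = some (Sum.inl ℓ2) := by
        rw [lookupL_cons, if_pos rfl]
      have holdv : dold = Tm.var (Sum.inr w) := by
        cases hold with
        | var_bar hl => rw [hlo] at hl; rw [Sum.inr.inj (Option.some.inj hl)]
        | var_arg hl _ _ => rw [hlo] at hl; simp at hl
        | var_fresh hl _ => rw [hlo] at hl; simp at hl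
        | var_free hl => rw [hlo] at hl; simp at hl
      have hnewv : dnew = d2 := by
        cases hnew with
        | var_bar hl => rw [hln] at hl; simp at hl
        | var_arg hl hi hs =>
          rw [hln] at hl
          have hℓ := Sum.inl.inj (Option.some.inj hl)
          subst hℓ
          rw [hinit] at hi
          have := Option.some.inj hi
          have hH : _ = _ := congrArg Prod.fst this
          have hsv : _ = _ := congrArg Prod.snd this
          simp only at hH hsv
          subst hH
          cases hsv
          exact (DecC_det hd2 hs).symm
        | var_fresh hl hi =>
          rw [hln] at hl
          have hℓ := Sum.inl.inj (Option.some.inj hl)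
          subst hℓ
          rw [hinit] at hi
          simp at hi
        | var_free hl => rw [hln] at hl; simp at hl
      rw [holdv, hnewv]
      exact SubstRel.var_eq
    · -- w ≠ x : lookups go to e
      have hlo : lookupL ((x, Sum.inr x) :: e) w = lookupL e w := by
        rw [lookupL_cons, if_neg hwx]
      have hln : lookupL ((x, Sum.inl ℓ2) :: e) w = lookupL e w := by
        rw [lookupL_cons, if_neg hwx]
      cases hold with
      | var_bar hl =>
        rw [hlo] at hl
        cases hnew with
        | var_bar hl' =>
          rw [hln, hl] at hl'
          cases Sum.inr.inj (Option.some.inj hl')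
          exact SubstRel.var_ne (fun hh => hR w _ hl (Sum.inr.inj hh))
        | var_arg hl' _ _ => rw [hln, hl] at hl'; simp at hl'
        | var_fresh hl' _ => rw [hln, hl] at hl'; simp at hl'
        | var_free hl' => rw [hln, hl] at hl'; simp at hl'
      | var_arg hl hi hs =>
        rw [hlo] at hl
        cases hnew with
        | var_bar hl' => rw [hln, hl] at hl'; simp at hl'
        | var_arg hl' hi' hs' =>
          rw [hln, hl] at hl'
          have hℓ := Sum.inl.inj (Option.some.inj hl')
          subst hℓ
          rw [hi] at hi'
          have := Option.some.inj hi'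
          have hH : _ = _ := congrArg Prod.fst this
          have hsv : _ = _ := congrArg Prod.snd this
          simp only at hH hsv
          subst hH
          cases hsv
          have hde := DecC_det hs hs'
          subst hde
          refine substRel_of_not_free hfree (DecC_bndInr hs) (fun hf => ?_)
          rcases DecC_freeInr hs _ hf with ⟨w', hw'⟩
          rcases lookupL_embEnv hw' with ⟨ℓ', hℓ'⟩
          simp at hℓ'
        | var_fresh hl' hi' =>
          rw [hln, hl] at hl'
          have hℓ := Sum.inl.inj (Option.some.inj hl')
          subst hℓ
          rw [hi] at hi'; simp at hi'
        | var_free hl' => rw [hln, hl] at hl'; simp at hl'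
      | var_fresh hl hi =>
        rw [hlo] at hl
        cases hnew with
        | var_bar hl' => rw [hln, hl] at hl'; simp at hl'
        | var_arg hl' hi' hs' =>
          rw [hln, hl] at hl'
          have hℓ := Sum.inl.inj (Option.some.inj hl')
          subst hℓ
          rw [hi] at hi'; simp at hi'
        | var_fresh hl' hi' =>
          rw [hln, hl] at hl'
          have hℓ := Sum.inl.inj (Option.some.inj hl')
          subst hℓ
          rw [hi] at hi'
          have := Option.some.inj hi'
          have hsv : _ = _ := congrArg Prod.snd this
          simp only at hsv
          cases hsv
          exact SubstRel.var_ne (by simp)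
        | var_free hl' => rw [hln, hl] at hl'; simp at hl'
      | var_free hl =>
        rw [hlo] at hl
        cases hnew with
        | var_bar hl' => rw [hln, hl] at hl'; simp at hl'
        | var_arg hl' _ _ => rw [hln, hl] at hl'; simp at hl'
        | var_fresh hl' _ => rw [hln, hl] at hl'; simp at hl'
        | var_free hl' => exact SubstRel.var_ne (by simp)
  | app a b iha ihb =>
    intro e dold dnew hold hnew hR
    cases hold with
    | app h1 h2 =>
      cases hnew with
      | app g1 g2 =>
        exact SubstRel.app (iha h1 g1 hR) (ihb h2 g2 hR)
  | lam y b ihb =>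
    intro e dold dnew hold hnew hR
    cases hold with
    | lam h =>
      cases hnew with
      | lam g =>
        by_cases hyx : y = x
        · subst hyx
          -- x is shadowed; the two bodies are decoded in extensionally equal envs
          have hg' : DecC H2 b ((y, Sum.inr y) :: (y, Sum.inr y) :: e) _ :=
            DecC_ext g (fun z => lookup_shadow e z)
          have := DecC_det h hg'
          subst this
          exact SubstRel.lam_same
        · -- swap the two bindings
          have h' : DecC H2 b ((x, Sum.inr x) :: (y, Sum.inr y) :: e) _ :=
            DecC_ext h (fun z => lookup_swap (fun hh => hyx hh.symm) e z)
          have g' : DecC H2 b ((x, Sum.inl ℓ2) :: (y, Sum.inr y) :: e) _ :=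
            DecC_ext g (fun z => lookup_swap (fun hh => hyx hh.symm) e z)
          have hR' : ∀ w z, lookupL ((y, Sum.inr y) :: e) w = some (Sum.inr z) → z ≠ x := by
            intro w z hw
            rw [lookupL_cons] at hw
            split at hw
            · cases Sum.inr.inj (Option.some.inj hw); exact hyx
            · exact hR w z hw
          refine SubstRel.lam (fun hh => hyx (Sum.inr.inj hh)) (hfree y) ?_
          exact ihb h' g' hR'

end SubstMain

section Invariant

def pendOrigin (H : List Conf) (ℓ : Loc) : Prop :=
  ∃ H' x t e, initOf H ℓ = some (H', Storable.pend x t e)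

def EnvOK (H : List Conf) (e : Env) : Prop :=
  ∀ x ℓ, lookupL e x = some ℓ → (initOf H ℓ).isSome ∧ ¬ pendOrigin H ℓ

def TopOK (H : List Conf) : Stack → Prop
  | [] => True
  | Frame.arg _ :: _ => False
  | Frame.appL _ :: _ => True
  | Frame.lamF _ :: _ => True
  | Frame.cache ℓ :: _ => pendOrigin H ℓ

inductive Good (H : List Conf) : Bool → Stack → Prop
  | nil : Good H true []
  | arg {b : Bool} {c : Closure} {s : Stack} :
      Good H b s → EnvOK H c.2 → Good H false (Frame.arg c :: s)
  | appL {b : Bool} {t : Tm Ident} {s : Stack} :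
      Good H b s → Neutral t → Good H true (Frame.appL t :: s)
  | lamF {x : Ident} {ℓ : Loc} {s : Stack} :
      Good H true (Frame.cache ℓ :: s) → pendOrigin H ℓ →
      Good H true (Frame.lamF x :: Frame.cache ℓ :: s)
  | cache {b : Bool} {ℓ : Loc} {s : Stack} :
      Good H b s → (initOf H ℓ).isSome →
      (pendOrigin H ℓ → Stack.noArgTop s ∧ Stack.noCacheTop s) →
      Good H b (Frame.cache ℓ :: s)

def svOK (H : List Conf) (ℓ : Loc) : Storable → Prop
  | .pend _ _ e => pendOrigin H ℓ ∧ EnvOK H e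
  | .todo c => EnvOK H c.2
  | .done (.tm t) => NormalTm t ∧ (¬ pendOrigin H ℓ → Neutral t)
  | .done (.abs _ _ e _) => EnvOK H e

def StoreOK (H : List Conf) (σ : Store) : Prop :=
  ∀ ℓ sv, lookupL σ ℓ = some sv → (initOf H ℓ).isSome ∧ svOK H ℓ sv

def valOK (H : List Conf) (s : Stack) : Value → Prop
  | .tm t => NormalTm t ∧ (¬ Neutral t → TopOK H s)
  | .abs _ _ e _ => EnvOK H e

def Inv (H : List Conf) : Conf → Prop
  | .eval c s σ => (∃ b, Good H b s) ∧ EnvOK H c.2 ∧ StoreOK H σ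
  | .cont σ v s => (∃ b, Good H b s) ∧ StoreOK H σ ∧ valOK H s v

/- monotonicity under history extension -/

lemma pendOrigin_mono {H : List Conf} {ℓ : Loc} (h : pendOrigin H ℓ) (L : List Conf) :
    pendOrigin (H ++ L) ℓ := by
  rcases h with ⟨H', x, t, e, hi⟩
  exact ⟨H', x, t, e, initOf_mono hi L⟩

lemma pendOrigin_anti {H : List Conf} {ℓ : Loc} {L : List Conf}
    (hs : (initOf H ℓ).isSome) (h : pendOrigin (H ++ L) ℓ) : pendOrigin H ℓ := by
  rcases h with ⟨H', x, t, e, hi⟩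
  rw [initOf_append_eq hs] at hi
  exact ⟨H', x, t, e, hi⟩

lemma pendOrigin_iff {H : List Conf} {ℓ : Loc} {L : List Conf}
    (hs : (initOf H ℓ).isSome) : pendOrigin (H ++ L) ℓ ↔ pendOrigin H ℓ :=
  ⟨pendOrigin_anti hs, fun h => pendOrigin_mono h L⟩

lemma EnvOK_mono {H : List Conf} {e : Env} (h : EnvOK H e) (L : List Conf) :
    EnvOK (H ++ L) e := by
  intro x ℓ hx
  rcases h x ℓ hx with ⟨h1, h2⟩
  rw [initOf_append_eq h1]
  exact ⟨h1, fun hp => h2 (pendOrigin_anti h1 hp)⟩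

lemma TopOK_mono {H : List Conf} {s : Stack} (h : TopOK H s) (L : List Conf) :
    TopOK (H ++ L) s := by
  cases s with
  | nil => trivial
  | cons f s =>
    cases f with
    | arg c => exact h
    | appL t => trivial
    | lamF x => trivial
    | cache ℓ => exact pendOrigin_mono h L

lemma svOK_mono {H : List Conf} {ℓ : Loc} {sv : Storable}
    (hs : (initOf H ℓ).isSome) (h : svOK H ℓ sv) (L : List Conf) :
    svOK (H ++ L) ℓ sv := by
  cases sv with
  | pend x t e => exact ⟨pendOrigin_mono h.1 L, EnvOK_mono h.2 L⟩
  | todo c => exact EnvOK_mono h L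
  | done v =>
    cases v with
    | tm t => exact ⟨h.1, fun hp => h.2 (fun hp' => hp (pendOrigin_mono hp' L))⟩
    | abs x t e ℓ' => exact EnvOK_mono h L

lemma StoreOK_mono {H : List Conf} {σ : Store} (h : StoreOK H σ) (L : List Conf) :
    StoreOK (H ++ L) σ := by
  intro ℓ sv hl
  rcases h ℓ sv hl with ⟨h1, h2⟩
  rw [initOf_append_eq h1]
  exact ⟨h1, svOK_mono h1 h2 L⟩

lemma Good_mono {H : List Conf} {b : Bool} {s : Stack} (h : Good H b s) (L : List Conf) :
    Good (H ++ L) b s := by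
  induction h with
  | nil => exact Good.nil
  | arg h he ih => exact Good.arg ih (EnvOK_mono he L)
  | appL h hn ih => exact Good.appL ih hn
  | lamF h hp ih => exact Good.lamF ih (pendOrigin_mono hp L)
  | cache h hs hp ih =>
    refine Good.cache ih (by rw [initOf_append_eq hs]; exact hs) ?_
    intro hpo
    exact hp (pendOrigin_anti hs hpo)

lemma good_true_of_tops {H : List Conf} {b : Bool} {s : Stack} (h : Good H b s)
    (h1 : Stack.noArgTop s) (h2 : Stack.noCacheTop s) : b = true := by
  cases h with
  | nil => rfl
  | arg _ _ => exact absurd h1 (by simp [Stack.noArgTop])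
  | appL _ _ => rfl
  | lamF _ _ => rfl
  | cache _ _ _ => exact absurd h2 (by simp [Stack.noCacheTop])

lemma TopOK_of_tops {H : List Conf} {s : Stack}
    (h1 : Stack.noArgTop s) (h2 : Stack.noCacheTop s) : TopOK H s := by
  cases s with
  | nil => trivial
  | cons f s =>
    cases f with
    | arg c => exact absurd h1 (by simp [Stack.noArgTop])
    | appL t => trivial
    | lamF x => trivial
    | cache ℓ => exact absurd h2 (by simp [Stack.noCacheTop])

end Invariant

section Preservation

lemma EnvOK_cons {H : List Conf} {e : Env} {x : Ident} {ℓ : Loc}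
    (h1 : (initOf H ℓ).isSome) (h2 : ¬ pendOrigin H ℓ) (he : EnvOK H e) :
    EnvOK H ((x, ℓ) :: e) := by
  intro y ℓ' hy
  rw [lookupL_cons] at hy
  split at hy
  · cases Option.some.inj hy; exact ⟨h1, h2⟩
  · exact he y ℓ' hy

lemma StoreOK_cons {H : List Conf} {σ : Store} {ℓ : Loc} {sv : Storable}
    (h : StoreOK H σ) (hi : (initOf H ℓ).isSome) (hsv : svOK H ℓ sv) :
    StoreOK H ((ℓ, sv) :: σ) := by
  intro ℓ' sv' hl
  by_cases hh : ℓ' = ℓ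
  · subst hh
    rw [lookupL_cons, if_pos rfl] at hl
    cases Option.some.inj hl
    exact ⟨hi, hsv⟩
  · rw [lookupL_cons, if_neg hh] at hl
    exact h ℓ' sv' hl

lemma not_pend_of_initOf {H : List Conf} {ℓ : Loc} {H' : List Conf} {t2 : Tm Ident}
    {e2 : Env} (h : initOf H ℓ = some (H', Storable.todo (t2, e2))) :
    ¬ pendOrigin H ℓ := by
  rintro ⟨H'', x, t, e, hi⟩
  rw [h] at hi
  simp at hi

lemma not_pend_of_initOf_done {H : List Conf} {ℓ : Loc} {H' : List Conf} {v : Value}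
    (h : initOf H ℓ = some (H', Storable.done v)) :
    ¬ pendOrigin H ℓ := by
  rintro ⟨H'', x, t, e, hi⟩
  rw [h] at hi
  simp at hi

theorem inv_step {k0 : Conf} {H : List Conf} {k k' : Conf} {r : ℕ}
    (hh : HistFrom k0 H k) (hinv : Inv H k) (hs : Step r k k') :
    Inv (H ++ [k']) k' := by
  cases hs with
  | r1 =>
    simp only [Inv] at hinv ⊢
    obtain ⟨⟨b, hg⟩, he, hst⟩ := hinv
    exact ⟨⟨false, Good.arg (Good_mono hg _) (EnvOK_mono he _)⟩,
      EnvOK_mono he _, StoreOK_mono hst _⟩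
  | @r2 x t e s σ ℓ hfresh =>
    simp only [Inv] at hinv ⊢
    obtain ⟨⟨b, hg⟩, he, hst⟩ := hinv
    have hfr : initOf (H ++ [Conf.cont ((ℓ, Storable.pend x t e) :: σ) (Value.abs x t e ℓ) s]) ℓ
        = some (H ++ [Conf.cont ((ℓ, Storable.pend x t e) :: σ) (Value.abs x t e ℓ) s],
          Storable.pend x t e) :=
      initOf_fresh hh hfresh (by rw [Conf.store, lookupL_cons, if_pos rfl])
    refine ⟨⟨b, Good_mono hg _⟩, ?_, ?_⟩
    · refine StoreOK_cons (StoreOK_mono hst _) (by rw [hfr]; rfl) ?_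
      exact ⟨⟨_, x, t, e, hfr⟩, EnvOK_mono he _⟩
    · exact EnvOK_mono he _
  | @r3 x e e2 s σ ℓ t hle hσ =>
    simp only [Inv] at hinv ⊢
    obtain ⟨⟨b, hg⟩, he, hst⟩ := hinv
    obtain ⟨hsome, hnp⟩ := he x ℓ hle
    obtain ⟨_, hsv⟩ := hst ℓ _ hσ
    refine ⟨⟨b, ?_⟩, ?_, StoreOK_mono hst _⟩
    · refine Good.cache (Good_mono hg _) (by rw [initOf_append_eq hsome]; exact hsome) ?_
      intro hp
      exact absurd (pendOrigin_anti hsome hp) hnp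
    · exact EnvOK_mono hsv _
  | @r4done x e s σ ℓ v hle hσ =>
    simp only [Inv] at hinv ⊢
    obtain ⟨⟨b, hg⟩, he, hst⟩ := hinv
    obtain ⟨hsome, hnp⟩ := he x ℓ hle
    obtain ⟨_, hsv⟩ := hst ℓ _ hσ
    refine ⟨⟨b, Good_mono hg _⟩, StoreOK_mono hst _, ?_⟩
    cases v with
    | tm t =>
      have hn : Neutral t := hsv.2 hnp
      exact ⟨hsv.1, fun hc => absurd hn hc⟩
    | abs x' t' e' ℓ' => exact EnvOK_mono hsv _
  | @r4free x e s σ hle =>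
    simp only [Inv] at hinv ⊢
    obtain ⟨⟨b, hg⟩, he, hst⟩ := hinv
    exact ⟨⟨b, Good_mono hg _⟩, StoreOK_mono hst _,
      ⟨NormalTm.neu (Neutral.var x), fun hc => absurd (Neutral.var x) hc⟩⟩
  | @r5 σ v ℓ s =>
    simp only [Inv] at hinv ⊢
    obtain ⟨⟨b, hg⟩, hst, hv⟩ := hinv
    cases hg with
    | cache hg' hsome hpc =>
      refine ⟨⟨b, Good_mono hg' _⟩, ?_, ?_⟩
      · -- StoreOK for the updated store
        intro ℓ' sv' hl
        by_cases hll : ℓ' = ℓ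
        · subst hll
          obtain ⟨rfl, w, hw⟩ := lookupL_updL_self hl
          refine ⟨by rw [initOf_append_eq hsome]; exact hsome, ?_⟩
          cases v with
          | tm t =>
            refine ⟨hv.1, fun hnp => ?_⟩
            by_contra hn
            exact hnp (pendOrigin_mono (hv.2 hn) _)
          | abs x' t' e' ℓ'' => exact EnvOK_mono hv _
        · rw [lookupL_updL_ne hll] at hl
          exact StoreOK_mono hst _ ℓ' sv' hl
      · cases v with
        | tm t =>
          refine ⟨hv.1, fun hn => ?_⟩
          obtain ⟨na, nc⟩ := hpc (hv.2 hn)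
          exact TopOK_of_tops na nc
        | abs x' t' e' ℓ'' => exact EnvOK_mono hv _
  | @r6 σ x t t2 e e2 ℓ ℓ2 s hfresh =>
    simp only [Inv] at hinv ⊢
    obtain ⟨⟨b, hg⟩, hst, hv⟩ := hinv
    cases hg with
    | arg hg' heOK =>
      have hfr : initOf (H ++ [Conf.eval (t, (x, ℓ2) :: e) s ((ℓ2, Storable.todo (t2, e2)) :: σ)]) ℓ2
          = some (H ++ [Conf.eval (t, (x, ℓ2) :: e) s ((ℓ2, Storable.todo (t2, e2)) :: σ)],
            Storable.todo (t2, e2)) :=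
        initOf_fresh hh hfresh (by rw [Conf.store, lookupL_cons, if_pos rfl])
      refine ⟨⟨_, Good_mono hg' _⟩, ?_, ?_⟩
      · exact EnvOK_cons (by rw [hfr]; rfl) (not_pend_of_initOf hfr) (EnvOK_mono hv _)
      · exact StoreOK_cons (StoreOK_mono hst _) (by rw [hfr]; rfl) (EnvOK_mono heOK _)
  | @r7 σ x x' x0 t t0 e e0 ℓ ℓ2 s hσ hs1 hs2 hℓ2 hx' =>
    simp only [Inv] at hinv ⊢
    obtain ⟨⟨b, hg⟩, hst, hv⟩ := hinv
    have hb : b = true := good_true_of_tops hg hs1 hs2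
    subst hb
    obtain ⟨hsomeℓ, hsvℓ⟩ := hst ℓ _ hσ
    have hfr : initOf (H ++ [Conf.eval (t, (x, ℓ2) :: e) (Frame.lamF x' :: Frame.cache ℓ :: s)
          ((ℓ2, Storable.done (.tm (.var x'))) :: σ)]) ℓ2
        = some (H ++ [Conf.eval (t, (x, ℓ2) :: e) (Frame.lamF x' :: Frame.cache ℓ :: s)
          ((ℓ2, Storable.done (.tm (.var x'))) :: σ)], Storable.done (.tm (.var x'))) :=
      initOf_fresh hh hℓ2 (by rw [Conf.store, lookupL_cons, if_pos rfl])
    refine ⟨⟨true, ?_⟩, ?_, ?_⟩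
    · refine Good.lamF (Good.cache (Good_mono hg _)
        (by rw [initOf_append_eq hsomeℓ]; exact hsomeℓ) (fun _ => ⟨hs1, hs2⟩)) ?_
      exact pendOrigin_mono hsvℓ.1 _
    · exact EnvOK_cons (by rw [hfr]; rfl) (not_pend_of_initOf_done hfr) (EnvOK_mono hv _)
    · refine StoreOK_cons (StoreOK_mono hst _) (by rw [hfr]; rfl) ?_
      exact ⟨NormalTm.neu (Neutral.var _), fun _ => Neutral.var _⟩
  | @r8 σ x t e ℓ s v hσ hs1 hs2 =>
    simp only [Inv] at hinv ⊢
    obtain ⟨⟨b, hg⟩, hst, hv⟩ := hinv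
    obtain ⟨_, hsv⟩ := hst ℓ _ hσ
    refine ⟨⟨b, Good_mono hg _⟩, StoreOK_mono hst _, ?_⟩
    cases v with
    | tm t' => exact ⟨hsv.1, fun _ => TopOK_of_tops hs1 hs2⟩
    | abs x' t' e' ℓ' => exact EnvOK_mono hsv _
  | @r9 σ t t2 e2 s =>
    simp only [Inv] at hinv ⊢
    obtain ⟨⟨b, hg⟩, hst, hv⟩ := hinv
    cases hg with
    | arg hg' heOK =>
      have hn : Neutral t := by
        by_contra hc
        exact hv.2 hc
      exact ⟨⟨true, Good.appL (Good_mono hg' _) hn⟩, EnvOK_mono heOK _, StoreOK_mono hst _⟩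
  | @r10 σ t1 t2 s =>
    simp only [Inv] at hinv ⊢
    obtain ⟨⟨b, hg⟩, hst, hv⟩ := hinv
    cases hg with
    | appL hg' hn =>
      have hna : Neutral (Tm.app t1 t2) := Neutral.app hn hv.1
      exact ⟨⟨_, Good_mono hg' _⟩, StoreOK_mono hst _,
        ⟨NormalTm.neu hna, fun hc => absurd hna hc⟩⟩
  | @r11 σ t x s =>
    simp only [Inv] at hinv ⊢
    obtain ⟨⟨b, hg⟩, hst, hv⟩ := hinv
    cases hg with
    | lamF hg' hp =>
      exact ⟨⟨true, Good_mono hg' _⟩, StoreOK_mono hst _,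
        ⟨NormalTm.lam hv.1, fun _ => pendOrigin_mono hp _⟩⟩

theorem inv_of_hist {t0 : Tm Ident} {H : List Conf} {k : Conf}
    (h : HistFrom (Conf.init t0) H k) : Inv H k := by
  induction h with
  | refl =>
    refine ⟨⟨true, Good.nil⟩, ?_, ?_⟩
    · intro x ℓ hx; simp [lookupL] at hx
    · intro ℓ sv hl; simp [lookupL] at hl
  | step hh hs ih => exact inv_step hh ih hs

end Preservation

section NOCtxLemmas

lemma decS_good_noctx_aux {H : List Conf} {s : Stack} {C : Ctx W} (hdec : DecS H s C) :
    ∀ {Hg : List Conf} {b : Bool}, Good Hg b s →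
      ∀ D : Ctx W, (b = true → NOCtx D) → (b = false → NOBar D) → NOCtx (C.comp D) := by
  induction hdec with
  | nil =>
    intro Hg b hg D h1 h2
    cases hg
    exact h1 rfl
  | @arg t e s C d hdec hc ih =>
    intro Hg b hg D h1 h2
    cases hg with
    | arg hg' he =>
      rw [comp_assoc]
      have hD : NOBar (Ctx.appL D d) := NOBar.appL (h2 rfl)
      have : (Ctx.appL Ctx.hole d).comp D = Ctx.appL D d := rfl
      rw [this]
      exact ih hg' (Ctx.appL D d) (fun _ => NOCtx.bar hD) (fun _ => hD)
  | @appL t s C hdec ih =>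
    intro Hg b hg D h1 h2
    cases hg with
    | appL hg' hn =>
      rw [comp_assoc]
      have hD : NOBar (Ctx.appR (emb t) D) := NOBar.appR (neutral_emb.1 hn) (h1 rfl)
      have : (Ctx.appR (emb t) Ctx.hole).comp D = Ctx.appR (emb t) D := rfl
      rw [this]
      exact ih hg' (Ctx.appR (emb t) D) (fun _ => NOCtx.bar hD) (fun _ => hD)
  | @lamF x s C hdec ih =>
    intro Hg b hg D h1 h2
    cases hg with
    | lamF hg' hp =>
      rw [comp_assoc]
      have hD : NOCtx (Ctx.lam (Sum.inl x) D) := NOCtx.lam (h1 rfl)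
      have : (Ctx.lam (Sum.inl x) Ctx.hole).comp D = Ctx.lam (Sum.inl x) D := rfl
      rw [this]
      exact ih hg' (Ctx.lam (Sum.inl x) D) (fun _ => hD)
        (fun hb => absurd hb (by simp))
  | @cache ℓ s C hdec ih =>
    intro Hg b hg D h1 h2
    cases hg with
    | cache hg' _ _ => exact ih hg' D h1 h2

lemma decS_good_noctx {H Hg : List Conf} {s : Stack} {C : Ctx W} {b : Bool}
    (hdec : DecS H s C) (hg : Good Hg b s) : NOCtx C := by
  have := decS_good_noctx_aux hdec hg Ctx.hole
    (fun _ => NOCtx.bar NOBar.hole) (fun _ => NOBar.hole)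
  rwa [comp_hole] at this

end NOCtxLemmas

/-- β-transition soundness: if a reachable configuration `k` steps to `k'` by
transition (6), then the decoding of `k` reduces in one normal-order β-step to
the decoding of `k'`. -/
theorem beta_transition_soundness {t0 : Tm Ident} {H : List Conf} {k k' : Conf}
    (h : HistFrom (Conf.init t0) H k) (hstep : Step 6 k k')
    {d d' : Tm W} (hd : DecK H k d) (hd' : DecK (H ++ [k']) k' d') :
    NOStep d d' := by
  cases hstep with
  | @r6 σ x t t2 e e2 ℓ ℓ2 s hfresh =>
    cases hd with
    | cont hS hV =>
      cases hS with
      | @arg _ _ _ C0 d2 hS0 hc2 =>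
        cases hV with
        | abs hlam =>
          cases hlam with
          | @lam _ _ _ _ db hb =>
            cases hd' with
            | @eval _ _ _ _ C' dnew hS' hnew =>
              have hCC : C0 = C' := DecS_det (DecS_mono hS0 _) hS'
              subst hCC
              have hfr : initOf (H ++ [Conf.eval (t, (x, ℓ2) :: e) s
                    ((ℓ2, Storable.todo (t2, e2)) :: σ)]) ℓ2
                  = some (H ++ [Conf.eval (t, (x, ℓ2) :: e) s
                    ((ℓ2, Storable.todo (t2, e2)) :: σ)], Storable.todo (t2, e2)) :=
                initOf_fresh h hfresh (by rw [Conf.store, lookupL_cons, if_pos rfl])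
              have hd2' : DecC (H ++ [Conf.eval (t, (x, ℓ2) :: e) s
                    ((ℓ2, Storable.todo (t2, e2)) :: σ)]) t2 (embEnv e2) d2 :=
                DecC_mono hc2 _
              have hb' : DecC (H ++ [Conf.eval (t, (x, ℓ2) :: e) s
                    ((ℓ2, Storable.todo (t2, e2)) :: σ)]) t
                    ((x, Sum.inr x) :: embEnv e) db :=
                DecC_mono hb _
              have hnew' : DecC (H ++ [Conf.eval (t, (x, ℓ2) :: e) s
                    ((ℓ2, Storable.todo (t2, e2)) :: σ)]) t
                    ((x, Sum.inl ℓ2) :: embEnv e) dnew := by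
                rw [← embEnv_cons]; exact hnew
              have hfree : ∀ z : Ident, ¬ FreeIn (Sum.inr z) d2 := by
                intro z hf
                rcases DecC_freeInr hc2 z hf with ⟨w, hw⟩
                rcases lookupL_embEnv hw with ⟨ℓ', h'⟩
                simp at h'
              have hR : ∀ w z, lookupL (embEnv e) w = some (Sum.inr z) → z ≠ x := by
                intro w z hw
                rcases lookupL_embEnv hw with ⟨ℓ', h'⟩
                simp at h'
              have hsub : SubstRel (Sum.inr x) d2 db dnew :=
                subst_main hfr hd2' hfree t hb' hnew' hR
              have hinv := inv_of_hist h
              simp only [Inv] at hinv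
              obtain ⟨⟨b, hg⟩, -, -⟩ := hinv
              cases hg with
              | arg hg' _ =>
                have hN : NOCtx C0 := decS_good_noctx hS0 hg'
                rw [comp_plug]
                show NOStep (C0.plug (Tm.app (Tm.lam (Sum.inr x) db) d2)) (C0.plug dnew)
                exact NOStep.mk hN hsub

end RKNL
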